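/- arXiv:1403.3838 — 3 statements merged into one kernel-verified Lean document; each statement's English description precedes it below -/
import Mathlib

section
/- Let n ≥ 1, m₀ ∈ ℕ, and R > 0, and let D ⊆ ℝ^n be the union of all closed dyadic cubes of side length 2^{-m₀} that are contained in the open ball B(0,R). Then for every x ∈ D and every t with 0 ≤ t < 1, the point tx lies in the interior of D. -/
open MeasureTheory Set Filter Metric Pointwise

noncomputable section

/-- The closed dyadic cube of side `2^{-m}` with lower corner `2^{-m} l`. -/
def dyadicCube (n m : ℕ) (l : Fin n → ℤ) : Set (EuclideanSpace ℝ (Fin n)) :=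
  {x | ∀ i, (2 : ℝ) ^ (-(m : ℤ)) * l i ≤ x i ∧ x i ≤ (2 : ℝ) ^ (-(m : ℤ)) * (l i + 1)}

/-- The union of all closed dyadic cubes of side `2^{-m}` contained in the open ball `B(0,R)`. -/
def dyadicRegion (n m : ℕ) (R : ℝ) : Set (EuclideanSpace ℝ (Fin n)) :=
  ⋃ l ∈ {l : Fin n → ℤ |
      dyadicCube n m l ⊆ Metric.ball (0 : EuclideanSpace ℝ (Fin n)) R},
    dyadicCube n m l

/-!
Let `x` lie in a dyadic cube `Q ⊆ B(0, R)` of side `h = 2^{-m₀}`, and let `c` be the vertex of `Q`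
farthest from the origin in every coordinate. The closed box `∏ [-|cᵢ|, |cᵢ|]` is a union of
dyadic cubes of side `h`, because each `|cᵢ|` is an integer multiple of `h`, and every point `w`
of it has `‖w‖ ≤ ‖c‖ < R`; hence it lies in `D`. Its interior is an open subset of `D`, and it
contains `t • x` for `0 ≤ t < 1` since `|t xᵢ| ≤ t |cᵢ| < |cᵢ|`.
-/

theorem EuclideanSpace.norm_le_norm_of_forall_abs_le {ι : Type*} [Fintype ι]
    {w c : EuclideanSpace ℝ ι} (hwc : ∀ i, |w i| ≤ |c i|) : ‖w‖ ≤ ‖c‖ := by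
  rw [EuclideanSpace.norm_eq, EuclideanSpace.norm_eq]
  gcongr with i
  simpa only [Real.norm_eq_abs] using hwc i

section Interval

variable {h : ℝ}

lemma mem_Icc_mul_floor_div (hh : 0 < h) (a : ℝ) :
    a ∈ Icc (h * ⌊a / h⌋) (h * (⌊a / h⌋ + 1)) :=
  ⟨(le_div_iff₀' hh).1 (Int.floor_le _), ((div_lt_iff₀' hh).1 (Int.lt_floor_add_one _)).le⟩

lemma abs_le_of_mem_Icc_mul_floor_div (hh : 0 < h) {k : ℤ} {a b : ℝ} (ha : |a| < h * k)
    (hb : b ∈ Icc (h * ⌊a / h⌋) (h * (⌊a / h⌋ + 1))) : |b| ≤ h * k := by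
  obtain ⟨ha₁, ha₂⟩ := abs_lt.1 ha
  have hlow : ((-k : ℤ) : ℝ) ≤ ⌊a / h⌋ := by
    exact_mod_cast Int.le_floor.2 ((le_div_iff₀' hh).2 (by push_cast; linarith))
  have hup : (⌊a / h⌋ : ℝ) + 1 ≤ k := by
    exact_mod_cast Int.floor_lt.2 ((div_lt_iff₀' hh).2 ha₂)
  push_cast at hlow
  refine abs_le.2 ⟨?_, ?_⟩
  · nlinarith [hb.1]
  · nlinarith [hb.2]

def farEndpoint (l : ℤ) : ℤ := if 0 ≤ l then l + 1 else l

lemma farEndpoint_ne_zero (l : ℤ) : farEndpoint l ≠ 0 := by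
  unfold farEndpoint; split_ifs <;> omega

lemma mul_farEndpoint_mem_Icc (hh : 0 ≤ h) (l : ℤ) :
    h * farEndpoint l ∈ Icc (h * l) (h * (l + 1)) := by
  unfold farEndpoint
  split_ifs <;> push_cast <;> constructor <;> nlinarith

lemma abs_le_mul_abs_farEndpoint (hh : 0 ≤ h) {l : ℤ} {a : ℝ}
    (ha : a ∈ Icc (h * l) (h * (l + 1))) : |a| ≤ h * |(farEndpoint l : ℝ)| := by
  obtain ⟨ha₁, ha₂⟩ := ha
  unfold farEndpoint
  split_ifs with hl
  · have : (0 : ℝ) ≤ l := by exact_mod_cast hl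
    push_cast
    rw [abs_of_nonneg (by nlinarith [mul_nonneg hh this]), abs_of_nonneg (by positivity)]
    exact ha₂
  · have : (l : ℝ) + 1 ≤ 0 := by exact_mod_cast (by omega : l + 1 ≤ 0)
    rw [abs_of_nonpos (by nlinarith), abs_of_nonpos (by linarith)]
    linarith

end Interval

section Dyadic

variable {n m : ℕ}

lemma mem_dyadicCube_floor (z : EuclideanSpace ℝ (Fin n)) :
    z ∈ dyadicCube n m (fun i => ⌊z i / (2 : ℝ) ^ (-(m : ℤ))⌋) :=
  fun i => mem_Icc_mul_floor_div (by positivity) (z i)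

lemma farCorner_mem_dyadicCube (l : Fin n → ℤ) :
    WithLp.toLp 2 (fun i => (2 : ℝ) ^ (-(m : ℤ)) * farEndpoint (l i)) ∈ dyadicCube n m l :=
  fun i => mul_farEndpoint_mem_Icc (by positivity) (l i)

lemma abs_le_of_mem_dyadicCube {l : Fin n → ℤ} {x : EuclideanSpace ℝ (Fin n)}
    (hx : x ∈ dyadicCube n m l) (i : Fin n) :
    |x i| ≤ (2 : ℝ) ^ (-(m : ℤ)) * |(farEndpoint (l i) : ℝ)| :=
  abs_le_mul_abs_farEndpoint (by positivity) (hx i)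

lemma dyadicCube_floor_subset_ball {k : Fin n → ℤ} {R : ℝ}
    (hkR : ‖WithLp.toLp 2 (fun i => (2 : ℝ) ^ (-(m : ℤ)) * k i)‖ < R)
    {z : EuclideanSpace ℝ (Fin n)} (hz : ∀ i, |z i| < (2 : ℝ) ^ (-(m : ℤ)) * k i) :
    dyadicCube n m (fun i => ⌊z i / (2 : ℝ) ^ (-(m : ℤ))⌋) ⊆ ball 0 R := by
  intro w hw
  rw [mem_ball_zero_iff]
  refine lt_of_le_of_lt (EuclideanSpace.norm_le_norm_of_forall_abs_le fun i => ?_) hkR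
  exact (abs_le_of_mem_Icc_mul_floor_div (by positivity) (hz i) (hw i)).trans (le_abs_self _)

end Dyadic

theorem stmt3_general (n m₀ : ℕ) (R : ℝ) :
    ∀ x ∈ dyadicRegion n m₀ R, ∀ t : ℝ, 0 ≤ t → t < 1 →
      t • x ∈ interior (dyadicRegion n m₀ R) := by
  intro x hx t ht₀ ht₁
  obtain ⟨l, hlR, hxl⟩ := mem_iUnion₂.1 hx
  set h : ℝ := (2 : ℝ) ^ (-(m₀ : ℤ))
  set k : Fin n → ℤ := fun i => |farEndpoint (l i)|
  have hcR : ‖WithLp.toLp 2 (fun i => h * k i)‖ < R := by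
    refine lt_of_le_of_lt (EuclideanSpace.norm_le_norm_of_forall_abs_le fun i => ?_)
      (mem_ball_zero_iff.1 (hlR (farCorner_mem_dyadicCube l)))
    simp only [k, Int.cast_abs, abs_mul, abs_abs]
    exact le_rfl
  have hbox_open : IsOpen {z : EuclideanSpace ℝ (Fin n) | ∀ i, |z i| < h * k i} := by
    simp only [ofPred_forall]
    exact isOpen_iInter_of_finite fun i => isOpen_lt (by fun_prop) continuous_const
  have hbox_sub : {z : EuclideanSpace ℝ (Fin n) | ∀ i, |z i| < h * k i} ⊆ dyadicRegion n m₀ R :=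
    fun z hz => mem_iUnion₂.2 ⟨_, dyadicCube_floor_subset_ball hcR hz, mem_dyadicCube_floor z⟩
  refine interior_maximal hbox_sub hbox_open fun i => ?_
  have hk : 0 < h * k i := mul_pos (by positivity)
    (by simpa [k] using farEndpoint_ne_zero (l i))
  calc |(t • x) i| = t * |x i| := by simp [abs_mul, abs_of_nonneg ht₀]
    _ ≤ t * (h * k i) := by
      gcongr
      simpa only [k, Int.cast_abs] using abs_le_of_mem_dyadicCube hxl i
    _ < h * k i := mul_lt_of_lt_one_left hk ht₁

theorem stmt3 (n m₀ : ℕ) (hn : 1 ≤ n) (R : ℝ) (hR : 0 < R) :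
    ∀ x ∈ dyadicRegion n m₀ R, ∀ t : ℝ, 0 ≤ t → t < 1 →
      t • x ∈ interior (dyadicRegion n m₀ R) :=
  stmt3_general n m₀ R
end
end

section
/- Let n ≥ 1, m₀ ∈ ℕ, and R > 0, and let D ⊆ ℝ^n be the union of all closed dyadic cubes of side length 2^{-m₀} that are contained in the open ball B(0,R); assume D is nonempty. Let ε₁ ∈ (0,1). Then for every x in (1+ε₁)D \ interior((1−ε₁)D), the set {r > 0 : x ∈ rD} is nonempty and its infimum f(x) lies in [1−ε₁, 1+ε₁]; moreover the function f : (1+ε₁)D \ interior((1−ε₁)D) → [1−ε₁, 1+ε₁], f(x) = inf{r > 0 : x ∈ rD}, is Lipschitz with Lipschitz constant 2^{m₀}. -/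
/-
The region `D` is solid up to `h = 2^{-m₀}`: replacing each coordinate of a point of `D` by
one of no larger absolute value, or by one of absolute value at most `h`, stays in `D`. Indeed
the corner of a cube of `D` farthest from the origin dominates, coordinatewise, every grid cube
of the box it spans, so that whole box lies in the ball. Consequently moving a point of `r • D`
by `v` lands in `(r + 2^{m₀}‖v‖) • D`. This makes the gauge `f` of `D` globally
`2^{m₀}`-Lipschitz, and shows that a point of `r • D` with `r < 1 - ε₁` is interior to
`(1 - ε₁) • D`, whence `f ≥ 1 - ε₁` off that interior.
-/

open MeasureTheory Set Filter Metric Pointwise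

noncomputable section

lemma EuclideanSpace.norm_le_norm_of_abs_le {ι : Type*} [Fintype ι]
    {x y : EuclideanSpace ℝ ι} (h : ∀ i, |x i| ≤ |y i|) : ‖x‖ ≤ ‖y‖ := by
  rw [EuclideanSpace.norm_eq, EuclideanSpace.norm_eq]
  gcongr with i
  simpa only [Real.norm_eq_abs] using h i

section Grid

variable {h : ℝ}

lemma exists_endpoint_Icc_grid (hh : 0 < h) (l : ℤ) :
    ∃ k : ℤ, 1 ≤ k ∧ Icc (h * l) (h * (l + 1)) ⊆ Icc (-(h * k)) (h * k) ∧
      ∃ t ∈ Icc (h * l) (h * (l + 1)), |t| = h * k := by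
  have hl : h * l ≤ h * (l + 1) := by nlinarith
  rcases le_or_gt 0 l with h0 | h0
  · have h0' : (0 : ℝ) ≤ l := by exact_mod_cast h0
    refine ⟨l + 1, by omega, ?_⟩
    push_cast
    refine ⟨Icc_subset_Icc (by nlinarith) le_rfl, h * (l + 1), ⟨hl, le_rfl⟩, ?_⟩
    exact abs_of_nonneg (by positivity)
  · have h0' : (l : ℝ) + 1 ≤ 0 := by exact_mod_cast h0
    refine ⟨-l, by omega, ?_⟩
    push_cast
    refine ⟨Icc_subset_Icc (by linarith) (by nlinarith), h * l, ⟨le_rfl, hl⟩, ?_⟩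
    rw [abs_of_nonpos (by nlinarith)]
    ring

lemma exists_mem_Icc_grid_subset (hh : 0 < h) {k : ℤ} (hk : 1 ≤ k) {t : ℝ}
    (ht : |t| ≤ h * k) :
    ∃ j : ℤ, t ∈ Icc (h * j) (h * (j + 1)) ∧
      Icc (h * j) (h * (j + 1)) ⊆ Icc (-(h * k)) (h * k) := by
  have hk' : (1 : ℝ) ≤ k := by exact_mod_cast hk
  obtain ⟨hlo, hhi⟩ := abs_le.mp ht
  refine ⟨min ⌊t / h⌋ (k - 1), ⟨?_, ?_⟩, Icc_subset_Icc ?_ ?_⟩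
  · calc h * (min ⌊t / h⌋ (k - 1) : ℤ) ≤ h * ⌊t / h⌋ := by
          gcongr; exact min_le_left _ _
      _ ≤ h * (t / h) := by gcongr; exact Int.floor_le _
      _ = t := by field_simp
  · rcases le_total ⌊t / h⌋ (k - 1) with hj | hj
    · rw [min_eq_left hj]
      calc t = h * (t / h) := by field_simp
        _ ≤ h * (⌊t / h⌋ + 1) := by gcongr; exact (Int.lt_floor_add_one _).le
    · rw [min_eq_right hj]
      push_cast
      linarith
  · have : -k ≤ ⌊t / h⌋ := Int.le_floor.mpr (by push_cast; rw [le_div_iff₀ hh]; linarith)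
    have : (-k : ℝ) ≤ (min ⌊t / h⌋ (k - 1) : ℤ) := by
      exact_mod_cast le_min this (by omega)
    nlinarith
  · have : ((min ⌊t / h⌋ (k - 1) : ℤ) : ℝ) ≤ k - 1 := by exact_mod_cast min_le_right _ _
    nlinarith

end Grid

/-- Solidity in the sense of vector lattices (`|y i| ≤ |x i|` for all `i` and `x ∈ D` give
`y ∈ D`), except that coordinates of absolute value at most `h` are unconstrained. -/
def IsSolidUpTo {ι : Type*} (h : ℝ) (D : Set (EuclideanSpace ℝ ι)) : Prop :=
  ∀ x ∈ D, ∀ y : EuclideanSpace ℝ ι, (∀ i, |y i| ≤ max |x i| h) → y ∈ D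

theorem isSolidUpTo_dyadicRegion (n m : ℕ) (R : ℝ) :
    IsSolidUpTo ((2 : ℝ) ^ (-(m : ℤ))) (dyadicRegion n m R) := by
  set h : ℝ := (2 : ℝ) ^ (-(m : ℤ))
  have hh : 0 < h := by positivity
  intro x hx y hy
  simp only [dyadicRegion, mem_iUnion₂, exists_prop] at hx ⊢
  obtain ⟨l, hlR, hxl⟩ := hx
  -- `c` is the corner of the cube of `x` farthest from the origin, `|c i| = h * k i`.
  choose k hk hsub c hc hck using fun i => exists_endpoint_Icc_grid hh (l i)
  have hcR : ‖WithLp.toLp 2 c‖ < R := by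
    simpa using hlR (show WithLp.toLp 2 c ∈ dyadicCube n m l from hc)
  have hk' : ∀ i, (1 : ℝ) ≤ k i := fun i => by exact_mod_cast hk i
  have hyk : ∀ i, |y i| ≤ h * k i := fun i =>
    (hy i).trans (max_le (abs_le.mpr (hsub i (hxl i))) (le_mul_of_one_le_right hh.le (hk' i)))
  choose j hyj hjsub using fun i => exists_mem_Icc_grid_subset hh (hk i) (hyk i)
  refine ⟨j, fun z hz => ?_, hyj⟩
  rw [mem_ball_zero_iff]
  refine lt_of_le_of_lt (EuclideanSpace.norm_le_norm_of_abs_le fun i => ?_) hcR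
  simpa [hck i] using abs_le.mpr (hjsub i (hz i))

namespace IsSolidUpTo

variable {ι : Type*} [Fintype ι] {h : ℝ} {D : Set (EuclideanSpace ℝ ι)}

lemma closedBall_subset (hD : IsSolidUpTo h D) (hne : D.Nonempty) : closedBall 0 h ⊆ D := by
  intro y hy
  obtain ⟨x, hx⟩ := hne
  refine hD x hx y fun i => le_max_of_le_right ?_
  simpa only [Real.norm_eq_abs] using
    (PiLp.norm_apply_le y i).trans (mem_closedBall_zero_iff.mp hy)

lemma absorbent (hD : IsSolidUpTo h D) (hh : 0 < h) (hne : D.Nonempty) : Absorbent ℝ D :=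
  absorbent_nhds_zero (mem_of_superset (closedBall_mem_nhds 0 hh) (hD.closedBall_subset hne))

lemma add_mem_smul (hD : IsSolidUpTo h D) (hh : 0 < h) {x v : EuclideanSpace ℝ ι} {r s : ℝ}
    (hr : 0 < r) (hx : x ∈ r • D) (hs : r + ‖v‖ / h ≤ s) : x + v ∈ s • D := by
  obtain ⟨u, hu, rfl⟩ := hx
  have hv : ‖v‖ ≤ (s - r) * h := (div_le_iff₀ hh).mp (by linarith)
  have hs0 : 0 < s := by have := div_nonneg (norm_nonneg v) hh.le; linarith
  rw [mem_smul_set_iff_inv_smul_mem₀ hs0.ne']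
  refine hD u hu _ fun i => ?_
  have hvi : |v i| ≤ ‖v‖ := by simpa only [Real.norm_eq_abs] using PiLp.norm_apply_le v i
  rw [PiLp.smul_apply, PiLp.add_apply, PiLp.smul_apply, smul_eq_mul, smul_eq_mul, abs_mul,
    abs_inv, abs_of_pos hs0, inv_mul_le_iff₀ hs0]
  have hsr : 0 ≤ s - r := le_of_mul_le_mul_right (by simpa using (norm_nonneg v).trans hv) hh
  calc |r * u i + v i| ≤ r * |u i| + (s - r) * h := by
        grw [abs_add_le, abs_mul, abs_of_pos hr, hvi, hv]
    _ ≤ r * max |u i| h + (s - r) * max |u i| h := by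
        gcongr
        exacts [le_max_left _ _, le_max_right _ _]
    _ = s * max |u i| h := by ring

lemma gauge_le_add_dist (hD : IsSolidUpTo h D) (hh : 0 < h) (hne : D.Nonempty)
    (a b : EuclideanSpace ℝ ι) : gauge D a ≤ gauge D b + h⁻¹ * dist a b := by
  by_contra! hlt
  obtain ⟨r, hr, hrlt, hb⟩ := exists_lt_of_gauge_lt (hD.absorbent hh hne)
    (show gauge D b < gauge D a - h⁻¹ * dist a b by linarith)
  have ha : a ∈ (r + ‖a - b‖ / h) • D := by
    simpa using hD.add_mem_smul hh hr hb (v := a - b) le_rfl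
  have := gauge_le_of_mem (by positivity) ha
  rw [dist_eq_norm, ← div_eq_inv_mul] at hrlt
  linarith

lemma lipschitzWith_gauge (hD : IsSolidUpTo h D) (hh : 0 < h) (hne : D.Nonempty) :
    LipschitzWith (Real.toNNReal h⁻¹) (gauge D) :=
  LipschitzWith.of_le_add_mul _ fun a b => by
    simpa [Real.coe_toNNReal _ (inv_nonneg.2 hh.le)] using hD.gauge_le_add_dist hh hne a b

lemma mem_interior_smul (hD : IsSolidUpTo h D) (hh : 0 < h) {x : EuclideanSpace ℝ ι} {r s : ℝ}
    (hr : 0 < r) (hrs : r < s) (hx : x ∈ r • D) : x ∈ interior (s • D) := by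
  rw [mem_interior_iff_mem_nhds, Metric.mem_nhds_iff]
  refine ⟨(s - r) * h, by nlinarith, fun z hz => ?_⟩
  have : ‖z - x‖ / h ≤ s - r := by
    rw [div_le_iff₀ hh]; exact (mem_ball_iff_norm.mp hz).le
  simpa using hD.add_mem_smul hh hr hx (v := z - x) (by linarith)

lemma le_gauge_of_notMem_interior (hD : IsSolidUpTo h D) (hh : 0 < h) (hne : D.Nonempty)
    {x : EuclideanSpace ℝ ι} {s : ℝ} (hx : x ∉ interior (s • D)) : s ≤ gauge D x := by
  by_contra! hlt
  obtain ⟨r, hr, hrs, hxr⟩ := exists_lt_of_gauge_lt (hD.absorbent hh hne) hlt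
  exact hx (hD.mem_interior_smul hh hr hrs hxr)

end IsSolidUpTo

theorem stmt4_general (n m₀ : ℕ) (R : ℝ)
    (hD : (dyadicRegion n m₀ R).Nonempty) (ε₁ : ℝ) (hε : ε₁ ∈ Ioo (0 : ℝ) 1) :
    (∀ x ∈ ((1 + ε₁) • dyadicRegion n m₀ R) \
        interior ((1 - ε₁) • dyadicRegion n m₀ R),
      {r : ℝ | 0 < r ∧ x ∈ r • dyadicRegion n m₀ R}.Nonempty ∧
      sInf {r : ℝ | 0 < r ∧ x ∈ r • dyadicRegion n m₀ R} ∈ Icc (1 - ε₁) (1 + ε₁)) ∧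
    LipschitzOnWith ((2 : NNReal) ^ m₀)
      (fun x => sInf {r : ℝ | 0 < r ∧ x ∈ r • dyadicRegion n m₀ R})
      (((1 + ε₁) • dyadicRegion n m₀ R) \
        interior ((1 - ε₁) • dyadicRegion n m₀ R)) := by
  have hsolid := isSolidUpTo_dyadicRegion n m₀ R
  have hh : (0 : ℝ) < 2 ^ (-(m₀ : ℤ)) := by positivity
  have hK : Real.toNNReal ((2 : ℝ) ^ (-(m₀ : ℤ)))⁻¹ = 2 ^ m₀ := by
    rw [zpow_neg, inv_inv, zpow_natCast, Real.toNNReal_pow zero_le_two, Real.toNNReal_ofNat]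
  -- The function in the statement is, by definition, `gauge (dyadicRegion n m₀ R)`.
  refine ⟨fun x hx => ⟨(hsolid.absorbent hh hD).gauge_set_nonempty,
    hsolid.le_gauge_of_notMem_interior hh hD hx.2,
    gauge_le_of_mem (by linarith [hε.1]) hx.1⟩, ?_⟩
  exact hK ▸ (hsolid.lipschitzWith_gauge hh hD).lipschitzOnWith

theorem stmt4 (n m₀ : ℕ) (hn : 1 ≤ n) (R : ℝ) (hR : 0 < R)
    (hD : (dyadicRegion n m₀ R).Nonempty) (ε₁ : ℝ) (hε : ε₁ ∈ Ioo (0 : ℝ) 1) :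
    (∀ x ∈ ((1 + ε₁) • dyadicRegion n m₀ R) \
        interior ((1 - ε₁) • dyadicRegion n m₀ R),
      {r : ℝ | 0 < r ∧ x ∈ r • dyadicRegion n m₀ R}.Nonempty ∧
      sInf {r : ℝ | 0 < r ∧ x ∈ r • dyadicRegion n m₀ R} ∈ Icc (1 - ε₁) (1 + ε₁)) ∧
    LipschitzOnWith ((2 : NNReal) ^ m₀)
      (fun x => sInf {r : ℝ | 0 < r ∧ x ∈ r • dyadicRegion n m₀ R})
      (((1 + ε₁) • dyadicRegion n m₀ R) \
        interior ((1 - ε₁) • dyadicRegion n m₀ R)) :=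
  stmt4_general n m₀ R hD ε₁ hε
end
end

section
/- Let 1 ≤ d < k ≤ n be integers. There exists a constant K = K(d,k) > 0, depending only on d and k, such that for every k-dimensional cube σ in ℝ^n and every set E ⊆ σ with H^d(E) < ∞, there is a subset X of (relative interior of σ) \ E with H^k(X) > 0 such that for every x ∈ X, H^d(Π_{σ,x}(E)) ≤ K·H^d(E). -/
/-!
An affine isometry preserves Hausdorff measures and commutes with radial projections, so it
suffices to treat the model cube `σ = [0,a]^k`. For `x` in the middle cube `(a/4, 3a/4)^k` we have
`B(x, a/4) ⊆ σ ⊆ B̄(x, √k a)`, and the radial projection onto `∂σ` is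
`y ↦ x + g(y - x)⁻¹ • (y - x)` with `g` the gauge of `σ` recentred at `x`; this map is
`C a / ρ`-Lipschitz outside `B(x, ρ)`. Cutting `E` into dyadic shells around `x` gives
`H^d(Π_x E) ≲ a^d ∫_E |x - y|^{-d} dH^d(y)`. As `d < k` the kernel `|x - y|^{-d}` is locally
integrable on `ℝ^k`, so by Tonelli the average of this potential over the middle cube is
`≲ a^{-d} H^d(E)`. The points where the potential is at most its average form a set of positive
Lebesgue measure, and removing `E` costs nothing since `H^k(E) = 0`.
-/

open MeasureTheory Set Filter Metric Pointwise

noncomputable section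

/-- The cube `[0,a]^k` in `ℝ^k`. -/
def modelCube (k : ℕ) (a : ℝ) : Set (EuclideanSpace ℝ (Fin k)) :=
  {y | ∀ i, y i ∈ Icc 0 a}

/-- The interior `(0,a)^k` of the cube `[0,a]^k` in `ℝ^k`. -/
def modelCubeInt (k : ℕ) (a : ℝ) : Set (EuclideanSpace ℝ (Fin k)) :=
  {y | ∀ i, y i ∈ Ioo 0 a}

/-- The image of `E` under the radial projection centered at `x` onto the set `B`
(taken to be the relative boundary of a cube): the points of `B` lying on a half-line
issued from `x` and passing through a point of `E`. -/
def radialProjImage {V : Type*} [AddCommGroup V] [Module ℝ V]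
    (B : Set V) (x : V) (E : Set V) : Set V :=
  {z | z ∈ B ∧ ∃ y ∈ E, ∃ s : ℝ, 1 ≤ s ∧ z = x + s • (y - x)}

open Topology
open scoped ENNReal NNReal

section DyadicShell

variable {X : Type*} [PseudoMetricSpace X]

def dyadicShell (x : X) (R : ℝ) (j : ℕ) : Set X :=
  {y | R / 2 ^ (j + 1) < dist x y ∧ dist x y ≤ R / 2 ^ j}

theorem measurableSet_dyadicShell [MeasurableSpace X] [OpensMeasurableSpace X] (x : X) (R : ℝ)
    (j : ℕ) : MeasurableSet (dyadicShell x R j) :=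
  (continuous_const.dist continuous_id).measurable measurableSet_Ioc

theorem pairwise_disjoint_dyadicShell (x : X) {R : ℝ} (hR : 0 < R) :
    Pairwise (Function.onFun Disjoint (dyadicShell x R)) := by
  refine (pairwise_disjoint_on _).2 fun i j hij => Set.disjoint_left.2 fun y hi hj => ?_
  have : R / 2 ^ j ≤ R / 2 ^ (i + 1) := by gcongr <;> norm_num; omega
  linarith [hi.1, hj.2]

theorem closedBall_diff_singleton_subset_iUnion_dyadicShell {X : Type*} [MetricSpace X] (x : X)
    (R : ℝ) : closedBall x R \ {x} ⊆ ⋃ j, dyadicShell x R j := by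
  rintro y ⟨hy, hyx : y ≠ x⟩
  rw [mem_closedBall'] at hy
  have hpos : 0 < dist x y := dist_pos.2 hyx.symm
  obtain ⟨j, hj, hj'⟩ := exists_nat_pow_near ((one_le_div hpos).2 hy) one_lt_two
  refine mem_iUnion.2 ⟨j, ?_, ?_⟩
  · rwa [div_lt_iff₀ (by positivity), ← div_lt_iff₀' hpos]
  · rwa [le_div_iff₀ (by positivity), mul_comm, ← le_div_iff₀ hpos]

theorem ofReal_le_inv_edist_of_mem_dyadicShell {x y : X} {R : ℝ} {j : ℕ} (hR : 0 < R)
    (hy : y ∈ dyadicShell x R j) : ENNReal.ofReal (2 ^ j / R) ≤ (edist x y)⁻¹ := by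
  rw [← inv_div, ENNReal.ofReal_inv_of_pos (by positivity), ENNReal.inv_le_inv, edist_dist]
  exact ENNReal.ofReal_le_ofReal hy.2

theorem inv_edist_le_ofReal_of_mem_dyadicShell {x y : X} {R : ℝ} {j : ℕ} (hR : 0 < R)
    (hy : y ∈ dyadicShell x R j) : (edist x y)⁻¹ ≤ ENNReal.ofReal (2 ^ (j + 1) / R) := by
  rw [← inv_div, ENNReal.ofReal_inv_of_pos (by positivity), ENNReal.inv_le_inv, edist_dist]
  exact ENNReal.ofReal_le_ofReal hy.1.le

end DyadicShell

def rieszPotential {X : Type*} [PseudoEMetricSpace X] [MeasurableSpace X] (d : ℕ)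
    (μ : Measure X) (x : X) : ℝ≥0∞ :=
  ∫⁻ y, (edist x y)⁻¹ ^ d ∂μ

section HausdorffImage

variable {X Y : Type*} [MetricSpace X] [MeasurableSpace X] [BorelSpace X] [MetricSpace Y]
  [MeasurableSpace Y] [BorelSpace Y]
  {f : X → Y} {x : X} {c R : ℝ}

theorem hausdorffMeasure_image_inter_dyadicShell_le (hc : 0 ≤ c) (hR : 0 < R)
    (hf : ∀ ρ > 0, ∀ y z, ρ ≤ dist x y → ρ ≤ dist x z →
      dist (f y) (f z) ≤ c / ρ * dist y z)
    (E : Set X) (d j : ℕ) :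
    μH[d] (f '' (E ∩ dyadicShell x R j)) ≤
      ENNReal.ofReal (2 * c) ^ d *
        ∫⁻ y in dyadicShell x R j, (edist x y)⁻¹ ^ d ∂μH[d].restrict E := by
  have hρ : 0 < R / 2 ^ (j + 1) := by positivity
  have hlip : LipschitzOnWith (c / (R / 2 ^ (j + 1))).toNNReal f (E ∩ dyadicShell x R j) := by
    refine LipschitzOnWith.of_dist_le_mul fun y hy z hz => ?_
    rw [Real.coe_toNNReal _ (by positivity)]
    exact hf _ hρ y z hy.2.1.le hz.2.1.le
  have hconst : c / (R / 2 ^ (j + 1)) = 2 * c * (2 ^ j / R) := by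
    field_simp; ring
  calc μH[d] (f '' (E ∩ dyadicShell x R j))
      ≤ ENNReal.ofReal (c / (R / 2 ^ (j + 1))) ^ d * μH[d] (E ∩ dyadicShell x R j) := by
        have := hlip.hausdorffMeasure_image_le d.cast_nonneg
        rwa [ENNReal.rpow_natCast] at this
    _ = ENNReal.ofReal (2 * c) ^ d *
          ∫⁻ _ in dyadicShell x R j, ENNReal.ofReal (2 ^ j / R) ^ d ∂μH[d].restrict E := by
        rw [setLIntegral_const, Measure.restrict_apply (measurableSet_dyadicShell x R j),
          inter_comm, hconst, ENNReal.ofReal_mul (by positivity), mul_pow, mul_assoc]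
    _ ≤ _ := by
        refine mul_le_mul_right (setLIntegral_mono' (measurableSet_dyadicShell x R j)
          fun y hy => ?_) _
        exact pow_le_pow_left' (ofReal_le_inv_edist_of_mem_dyadicShell hR hy) d

theorem hausdorffMeasure_image_le_rieszPotential (hc : 0 ≤ c) (hR : 0 < R)
    (hf : ∀ ρ > 0, ∀ y z, ρ ≤ dist x y → ρ ≤ dist x z →
      dist (f y) (f z) ≤ c / ρ * dist y z)
    {E : Set X} (hE : E ⊆ closedBall x R \ {x}) (d : ℕ) :
    μH[d] (f '' E) ≤ ENNReal.ofReal (2 * c) ^ d * rieszPotential d (μH[d].restrict E) x := by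
  have hcover : f '' E ⊆ ⋃ j, f '' (E ∩ dyadicShell x R j) := by
    rw [← image_iUnion, ← inter_iUnion]
    exact image_mono (subset_inter subset_rfl
      (hE.trans (closedBall_diff_singleton_subset_iUnion_dyadicShell x R)))
  calc μH[d] (f '' E) ≤ ∑' j, μH[d] (f '' (E ∩ dyadicShell x R j)) :=
        (measure_mono hcover).trans (measure_iUnion_le _)
    _ ≤ ∑' j, ENNReal.ofReal (2 * c) ^ d *
          ∫⁻ y in dyadicShell x R j, (edist x y)⁻¹ ^ d ∂μH[d].restrict E :=
        ENNReal.tsum_le_tsum fun j => hausdorffMeasure_image_inter_dyadicShell_le hc hR hf E d j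
    _ = ENNReal.ofReal (2 * c) ^ d *
          ∫⁻ y in ⋃ j, dyadicShell x R j, (edist x y)⁻¹ ^ d ∂μH[d].restrict E := by
        rw [ENNReal.tsum_mul_left, lintegral_iUnion (measurableSet_dyadicShell x R)
          (pairwise_disjoint_dyadicShell x hR)]
    _ ≤ _ := mul_le_mul_right (setLIntegral_le_lintegral _ _) _

end HausdorffImage

section LebesguePotential

variable {V : Type*} [NormedAddCommGroup V] [NormedSpace ℝ V] [FiniteDimensional ℝ V]
  [MeasurableSpace V] [BorelSpace V] (μ : Measure V) [μ.IsAddHaarMeasure]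

theorem setLIntegral_dyadicShell_inv_edist_pow_le {d m : ℕ}
    (hkm : Module.finrank ℝ V = d + m) (hm : 0 < m) (y : V) {R : ℝ} (hR : 0 < R) (j : ℕ) :
    ∫⁻ x in dyadicShell y R j, (edist y x)⁻¹ ^ d ∂μ ≤
      ENNReal.ofReal (2 ^ d * R ^ m) * μ (ball 0 1) * 2⁻¹ ^ j := by
  have hreal : (2 ^ (j + 1) / R) ^ d * (R / 2 ^ j) ^ (d + m) ≤ 2 ^ d * R ^ m * 2⁻¹ ^ j := by
    have h2j : (2 : ℝ) ^ j ≤ (2 ^ j) ^ m := le_self_pow₀ (one_le_pow₀ one_le_two) hm.ne'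
    calc (2 ^ (j + 1) / R) ^ d * (R / 2 ^ j) ^ (d + m) = 2 ^ d * R ^ m / (2 ^ j) ^ m := by
          rw [div_pow, div_pow, pow_add R, pow_add, mul_pow]; field_simp; ring
      _ ≤ 2 ^ d * R ^ m / 2 ^ j := by gcongr
      _ = 2 ^ d * R ^ m * 2⁻¹ ^ j := by rw [inv_pow, div_eq_mul_inv]
  calc ∫⁻ x in dyadicShell y R j, (edist y x)⁻¹ ^ d ∂μ
      ≤ ∫⁻ _ in dyadicShell y R j, ENNReal.ofReal (2 ^ (j + 1) / R) ^ d ∂μ :=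
        setLIntegral_mono' (measurableSet_dyadicShell y R j) fun x hx =>
          pow_le_pow_left' (inv_edist_le_ofReal_of_mem_dyadicShell hR hx) d
    _ ≤ ENNReal.ofReal (2 ^ (j + 1) / R) ^ d * μ (closedBall y (R / 2 ^ j)) := by
        rw [setLIntegral_const]
        exact mul_le_mul_right (measure_mono fun x hx => mem_closedBall'.2 hx.2) _
    _ = ENNReal.ofReal ((2 ^ (j + 1) / R) ^ d * (R / 2 ^ j) ^ (d + m)) * μ (ball 0 1) := by
        rw [μ.addHaar_closedBall y (by positivity), hkm, ← mul_assoc,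
          ← ENNReal.ofReal_pow (by positivity), ← ENNReal.ofReal_mul (by positivity)]
    _ ≤ ENNReal.ofReal (2 ^ d * R ^ m * 2⁻¹ ^ j) * μ (ball 0 1) := by
        gcongr ?_ * _
        exact ENNReal.ofReal_le_ofReal hreal
    _ = ENNReal.ofReal (2 ^ d * R ^ m) * μ (ball 0 1) * 2⁻¹ ^ j := by
        rw [ENNReal.ofReal_mul (by positivity), ENNReal.ofReal_pow (by positivity),
          ENNReal.ofReal_inv_of_pos two_pos, ENNReal.ofReal_ofNat]
        ring

theorem rieszPotential_restrict_closedBall_le {d : ℕ} (hd : d < Module.finrank ℝ V) (y : V)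
    {R : ℝ} (hR : 0 < R) :
    rieszPotential d (μ.restrict (closedBall y R)) y ≤
      ENNReal.ofReal (2 ^ (d + 1) * R ^ (Module.finrank ℝ V - d)) * μ (ball 0 1) := by
  have : Nontrivial V := Module.nontrivial_of_finrank_pos (R := ℝ) (by omega)
  obtain ⟨m, hkm⟩ := Nat.exists_eq_add_of_le hd.le
  have hm : 0 < m := by omega
  rw [hkm, Nat.add_sub_cancel_left]
  set C := ENNReal.ofReal (2 ^ d * R ^ m) * μ (ball 0 1)
  have hcover : closedBall y R ⊆ {y} ∪ ⋃ j, dyadicShell y R j :=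
    sdiff_subset_iff.1 (closedBall_diff_singleton_subset_iUnion_dyadicShell y R)
  calc ∫⁻ x in closedBall y R, (edist y x)⁻¹ ^ d ∂μ
      ≤ ∫⁻ x in {y}, (edist y x)⁻¹ ^ d ∂μ +
          ∫⁻ x in ⋃ j, dyadicShell y R j, (edist y x)⁻¹ ^ d ∂μ :=
        (lintegral_mono_set hcover).trans (lintegral_union_le _ _ _)
    _ ≤ 0 + ∑' j, C * 2⁻¹ ^ j :=
        add_le_add (setLIntegral_measure_zero _ _ (measure_singleton y)).le
          ((lintegral_iUnion_le _ _).trans (ENNReal.tsum_le_tsum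
            (setLIntegral_dyadicShell_inv_edist_pow_le μ hkm hm y hR)))
    _ = ENNReal.ofReal (2 ^ (d + 1) * R ^ m) * μ (ball 0 1) := by
        rw [zero_add, ENNReal.tsum_mul_left, ENNReal.tsum_geometric, ENNReal.one_sub_inv_two,
          inv_inv, pow_succ, mul_right_comm _ (2 : ℝ), ENNReal.ofReal_mul (by positivity),
          ENNReal.ofReal_ofNat]
        ring

end LebesguePotential

theorem setLIntegral_rieszPotential_le {X : Type*} [PseudoEMetricSpace X] [MeasurableSpace X]
    [OpensMeasurableSpace X] [SecondCountableTopology X] (μ ν : Measure X) [SFinite μ]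
    [SFinite ν] (d : ℕ) (S : Set X) {M : ℝ≥0∞}
    (hM : ∀ᵐ y ∂ν, rieszPotential d (μ.restrict S) y ≤ M) :
    ∫⁻ x in S, rieszPotential d ν x ∂μ ≤ M * ν univ := by
  unfold rieszPotential at hM ⊢
  rw [lintegral_lintegral_swap (measurable_edist.inv.pow_const d).aemeasurable,
    ← lintegral_const]
  refine lintegral_mono_ae (hM.mono fun y hy => ?_)
  simpa only [edist_comm y] using hy

section RadialProjection

variable {V : Type*} [NormedAddCommGroup V] [NormedSpace ℝ V] {C : Set V} {x : V}

-- For convex `C` with `x` in its interior this is the radial projection from `x` onto `∂C`: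
-- the recentred gauge equals `1` on `C \ interior C`.
def radialProj (C : Set V) (x y : V) : V :=
  x + (gauge ((x + ·) ⁻¹' C) (y - x))⁻¹ • (y - x)

theorem gauge_preimage_add_left_eq_one (hC : Convex ℝ C) (hx : C ∈ 𝓝 x) {z : V}
    (hz : z ∈ C \ interior C) : gauge ((x + ·) ⁻¹' C) (z - x) = 1 := by
  have hD : (x + ·) ⁻¹' C ∈ 𝓝 (0 : V) :=
    (continuous_const_add x).continuousAt.preimage_mem_nhds (by rwa [add_zero])
  refine (gauge_le_one_of_mem (by simpa using hz.1)).antisymm (not_lt.1 fun hlt => hz.2 ?_)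
  rw [gauge_lt_one_iff_mem_interior (hC.translate_preimage_right x) hD] at hlt
  change z - x ∈ interior (Homeomorph.addLeft x ⁻¹' C) at hlt
  rw [← (Homeomorph.addLeft x).preimage_interior] at hlt
  simpa using hlt

theorem radialProjImage_subset_image_radialProj (hC : Convex ℝ C) (hx : C ∈ 𝓝 x)
    (E : Set V) : radialProjImage (C \ interior C) x E ⊆ radialProj C x '' E := by
  rintro _ ⟨hz, y, hy, s, hs, rfl⟩
  refine ⟨y, hy, ?_⟩
  have h := gauge_preimage_add_left_eq_one hC hx hz
  rw [add_sub_cancel_left, gauge_smul_of_nonneg (by linarith)] at h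
  rw [radialProj, eq_inv_of_mul_eq_one_right h, inv_inv]

theorem norm_inv_gauge_smul_sub_le {s : Set V} (hs : Convex ℝ s) {r R : ℝ} (hr : 0 < r)
    (hrs : ball 0 r ⊆ s) (hsR : s ⊆ closedBall 0 R) {ρ : ℝ} (hρ : 0 < ρ) {v w : V}
    (hv : ρ ≤ ‖v‖) (hw : ρ ≤ ‖w‖) :
    ‖(gauge s v)⁻¹ • v - (gauge s w)⁻¹ • w‖ ≤
      R * (1 + R / r) / ρ * ‖v - w‖ := by
  have : Nontrivial V := nontrivial_of_ne v 0 (norm_pos_iff.1 (hρ.trans_le hv))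
  have hR : 0 < R := by
    obtain ⟨u, hu⟩ := exists_norm_eq V (half_pos hr).le
    have := hsR (hrs (mem_ball_zero_iff.2 (hu.trans_lt (half_lt_self hr))))
    rw [mem_closedBall_zero_iff, hu] at this
    linarith
  have hgauge : ∀ u, ‖u‖ / R ≤ gauge s u := fun _ =>
    le_gauge_of_subset_closedBall ((absorbent_ball_zero hr).mono hrs) hR.le hsR
  have hlow : ∀ {u}, ρ ≤ ‖u‖ → ρ / R ≤ gauge s u := fun hu =>
    (div_le_div_of_nonneg_right hu hR.le).trans (hgauge _)
  have hgv : 0 < gauge s v := (div_pos hρ hR).trans_le (hlow hv)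
  have hgw : 0 < gauge s w := (div_pos hρ hR).trans_le (hlow hw)
  have hgv_inv : (gauge s v)⁻¹ ≤ R / ρ := by
    rw [← inv_div]; exact inv_anti₀ (div_pos hρ hR) (hlow hv)
  have hwR : ‖w‖ / gauge s w ≤ R := by
    rw [div_le_iff₀ hgw, mul_comm, ← div_le_iff₀ hR]
    exact hgauge w
  have hlip : |gauge s w - gauge s v| ≤ ‖v - w‖ / r := by
    have := (hs.lipschitzWith_gauge (r := r.toNNReal) (by simpa using hr)
      (by rwa [Real.coe_toNNReal _ hr.le])).dist_le_mul w v
    rwa [Real.dist_eq, dist_eq_norm, norm_sub_rev, NNReal.coe_inv, Real.coe_toNNReal _ hr.le,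
      ← div_eq_inv_mul] at this
  have hinv : |(gauge s v)⁻¹ - (gauge s w)⁻¹| * ‖w‖ =
      |gauge s w - gauge s v| * (gauge s v)⁻¹ * (‖w‖ / gauge s w) := by
    rw [inv_sub_inv hgv.ne' hgw.ne', abs_div, abs_of_pos (mul_pos hgv hgw)]
    field_simp
  have hdecomp : (gauge s v)⁻¹ • v - (gauge s w)⁻¹ • w =
      (gauge s v)⁻¹ • (v - w) + ((gauge s v)⁻¹ - (gauge s w)⁻¹) • w := by
    module
  calc ‖(gauge s v)⁻¹ • v - (gauge s w)⁻¹ • w‖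
      ≤ (gauge s v)⁻¹ * ‖v - w‖ + |(gauge s v)⁻¹ - (gauge s w)⁻¹| * ‖w‖ := by
        rw [hdecomp]
        refine (norm_add_le _ _).trans_eq ?_
        rw [norm_smul, norm_smul, Real.norm_of_nonneg (inv_nonneg.2 hgv.le), Real.norm_eq_abs]
    _ ≤ R / ρ * ‖v - w‖ + ‖v - w‖ / r * (R / ρ) * R := by
        rw [hinv]; gcongr
    _ = R * (1 + R / r) / ρ * ‖v - w‖ := by
        field_simp

theorem dist_radialProj_le (hC : Convex ℝ C) {r R : ℝ} (hr : 0 < r) (hball : ball x r ⊆ C)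
    (hCR : C ⊆ closedBall x R) {ρ : ℝ} (hρ : 0 < ρ) {y z : V} (hy : ρ ≤ dist x y)
    (hz : ρ ≤ dist x z) :
    dist (radialProj C x y) (radialProj C x z) ≤ R * (1 + R / r) / ρ * dist y z := by
  have h := norm_inv_gauge_smul_sub_le (hC.translate_preimage_right x) hr
    (fun _ hu => hball (by simpa using hu)) (fun _ hu => by simpa using hCR hu) hρ
    (v := y - x) (w := z - x) (by rwa [← dist_eq_norm']) (by rwa [← dist_eq_norm'])
  rwa [dist_eq_norm, radialProj, radialProj, add_sub_add_left_eq_sub, dist_eq_norm,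
    ← sub_sub_sub_cancel_right y z x]

end RadialProjection

theorem radialProjImage_image {V W : Type*} [AddCommGroup V] [Module ℝ V] [AddCommGroup W]
    [Module ℝ W] (f : V →ᵃ[ℝ] W) (hf : Function.Injective f) (B : Set V) (x : V)
    (E : Set V) :
    radialProjImage (f '' B) (f x) (f '' E) = f '' radialProjImage B x E := by
  have key : ∀ y (s : ℝ), f (x + s • (y - x)) = f x + s • (f y - f x) := fun y s => by
    simpa only [AffineMap.lineMap_apply_module', add_comm] using f.apply_lineMap x y s
  ext z
  constructor
  · rintro ⟨⟨b, hb, rfl⟩, _, ⟨y, hy, rfl⟩, s, hs, h⟩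
    exact ⟨b, ⟨hb, y, hy, s, hs, hf (h.trans (key y s).symm)⟩, rfl⟩
  · rintro ⟨_, ⟨hb, y, hy, s, hs, rfl⟩, rfl⟩
    exact ⟨mem_image_of_mem f hb, f y, mem_image_of_mem f hy, s, hs, key y s⟩

theorem volume_le_hausdorffMeasure {ι : Type*} [Fintype ι] (S : Set (EuclideanSpace ℝ ι)) :
    volume S ≤ μH[Fintype.card ι] S := by
  have hvol : volume S = volume (WithLp.ofLp '' S) := by
    rw [← (EuclideanSpace.volume_preserving_symm_measurableEquiv_toLp ι).symm
      |>.measure_preimage_equiv S]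
    congr 1
    exact ((WithLp.equiv 2 _).image_eq_preimage_symm S).symm
  have := (PiLp.lipschitzWith_ofLp 2 fun _ : ι => ℝ).hausdorffMeasure_image_le
    (Nat.cast_nonneg (Fintype.card ι)) S
  rw [hvol, ← hausdorffMeasure_pi_real]
  simpa using this

def radialProjConst (d k : ℕ) : ℝ :=
  (2 * √k * (1 + 4 * √k)) ^ d * 2 ^ (d + 1 + k) * √k ^ (k - d) *
    (volume (ball (0 : EuclideanSpace ℝ (Fin k)) 1)).toReal

theorem radialProjConst_pos {d k : ℕ} (hk : 0 < k) : 0 < radialProjConst d k := by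
  have hω := ENNReal.toReal_pos
    (measure_ball_pos volume (0 : EuclideanSpace ℝ (Fin k)) one_pos).ne' measure_ball_lt_top.ne
  unfold radialProjConst
  positivity

section ModelCube

variable {k d : ℕ} {a : ℝ} {E : Set (EuclideanSpace ℝ (Fin k))}

def middleCube (k : ℕ) (a : ℝ) : Set (EuclideanSpace ℝ (Fin k)) :=
  {y | ∀ i, y i ∈ Ioo (a / 4) (3 * a / 4)}

theorem modelCube_eq_preimage : modelCube k a = WithLp.ofLp ⁻¹' univ.pi fun _ => Icc 0 a := by
  ext; simp only [modelCube, mem_preimage, mem_univ_pi, mem_ofPred_eq]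

theorem middleCube_eq_preimage :
    middleCube k a = WithLp.ofLp ⁻¹' univ.pi fun _ => Ioo (a / 4) (3 * a / 4) := by
  ext; simp only [middleCube, mem_preimage, mem_univ_pi, mem_ofPred_eq]

theorem interior_modelCube : interior (modelCube k a) = modelCubeInt k a := by
  have hopen : IsOpenMap (WithLp.ofLp : EuclideanSpace ℝ (Fin k) → Fin k → ℝ) :=
    (PiLp.homeomorph 2 _).isOpenMap
  rw [modelCube_eq_preimage, ← hopen.preimage_interior_eq_interior_preimage
    (PiLp.continuous_ofLp 2 _), interior_pi_set finite_univ]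
  ext; simp only [modelCubeInt, mem_preimage, mem_univ_pi, interior_Icc, mem_ofPred_eq]

theorem convex_modelCube : Convex ℝ (modelCube k a) := by
  rw [modelCube_eq_preimage]
  exact (convex_pi fun _ _ => convex_Icc 0 a).linear_preimage
    (EuclideanSpace.equiv (Fin k) ℝ).toLinearMap

theorem measurableSet_modelCube : MeasurableSet (modelCube k a) := by
  rw [modelCube_eq_preimage]
  exact (MeasurableSet.univ_pi fun _ => measurableSet_Icc).preimage
    (PiLp.continuous_ofLp 2 _).measurable

theorem volume_middleCube : volume (middleCube k a) = ENNReal.ofReal (a / 2) ^ k := by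
  rw [middleCube_eq_preimage, (PiLp.volume_preserving_ofLp _).measure_preimage
    (MeasurableSet.univ_pi fun _ => measurableSet_Ioo).nullMeasurableSet, Real.volume_pi_Ioo]
  simp only [Finset.prod_const, Finset.card_univ, Fintype.card_fin]
  congr 2; ring

theorem middleCube_subset_modelCubeInt : middleCube k a ⊆ modelCubeInt k a := fun x hx i =>
  ⟨by linarith [(hx i).1, (hx i).2], by linarith [(hx i).1, (hx i).2]⟩

theorem middleCube_subset_modelCube : middleCube k a ⊆ modelCube k a :=
  middleCube_subset_modelCubeInt.trans (interior_modelCube ▸ interior_subset)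

theorem dist_le_of_mem_modelCube (ha : 0 ≤ a) {y z : EuclideanSpace ℝ (Fin k)}
    (hy : y ∈ modelCube k a) (hz : z ∈ modelCube k a) : dist y z ≤ √k * a := by
  have hcoord : ∀ i, dist (y i) (z i) ≤ a := fun i => by
    simpa using Real.dist_le_of_mem_Icc (hy i) (hz i)
  calc dist y z = √(∑ i, dist (y i) (z i) ^ 2) := EuclideanSpace.dist_eq y z
    _ ≤ √(∑ _i : Fin k, a ^ 2) := by gcongr with i; exact hcoord i
    _ = √k * a := by simp [Real.sqrt_mul, ha]

theorem ball_subset_modelCube {x : EuclideanSpace ℝ (Fin k)} (hx : x ∈ middleCube k a) :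
    ball x (a / 4) ⊆ modelCube k a := by
  intro y hy i
  have h := (PiLp.dist_apply_le y x i).trans_lt hy
  rw [Real.dist_eq, abs_lt] at h
  constructor <;> linarith [(hx i).1, (hx i).2]

theorem hausdorffMeasure_radialProjImage_le_rieszPotential (hk : 0 < k) (ha : 0 < a)
    {x : EuclideanSpace ℝ (Fin k)} (hx : x ∈ middleCube k a) (hE : E ⊆ modelCube k a)
    (hxE : x ∉ E) (d : ℕ) :
    μH[d] (radialProjImage (modelCube k a \ modelCubeInt k a) x E) ≤
      ENNReal.ofReal (2 * (√k * a * (1 + √k * a / (a / 4)))) ^ d *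
        rieszPotential d (μH[d].restrict E) x := by
  have hxC := middleCube_subset_modelCube hx
  have hball := ball_subset_modelCube hx
  have hCR : modelCube k a ⊆ closedBall x (√k * a) := fun y hy =>
    mem_closedBall.2 (dist_le_of_mem_modelCube ha.le hy hxC)
  rw [← interior_modelCube]
  refine (measure_mono (radialProjImage_subset_image_radialProj convex_modelCube
    (mem_of_superset (ball_mem_nhds x (by positivity)) hball) E)).trans ?_
  refine hausdorffMeasure_image_le_rieszPotential (by positivity) (by positivity)
    (fun _ hρ _ _ hy hz => dist_radialProj_le convex_modelCube (by positivity) hball hCR hρ hy hz)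
    (fun y hy => ⟨hCR (hE hy), fun h => hxE (h ▸ hy)⟩) d

theorem setLAverage_middleCube_rieszPotential_le (hdk : d < k) (ha : 0 < a)
    (hE : E ⊆ modelCube k a) (hfin : μH[d] E ≠ ⊤) :
    ⨍⁻ x in middleCube k a, rieszPotential d (μH[d].restrict E) x ∂volume ≤
      ENNReal.ofReal (2 ^ (d + 1) * (√k * a) ^ (k - d) *
        (volume (ball (0 : EuclideanSpace ℝ (Fin k)) 1)).toReal / (a / 2) ^ k) * μH[d] E := by
  have : IsFiniteMeasure (μH[d].restrict E) := isFiniteMeasure_restrict.2 hfin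
  have hk : Module.finrank ℝ (EuclideanSpace ℝ (Fin k)) = k := finrank_euclideanSpace_fin
  have hR : 0 < √k * a := mul_pos (Real.sqrt_pos.2 (Nat.cast_pos.2 (by omega))) ha
  have hint : ∫⁻ x in middleCube k a, rieszPotential d (μH[d].restrict E) x ≤
      ENNReal.ofReal (2 ^ (d + 1) * (√k * a) ^ (k - d)) *
        volume (ball (0 : EuclideanSpace ℝ (Fin k)) 1) * μH[d].restrict E univ := by
    refine setLIntegral_rieszPotential_le _ _ d _ (ae_restrict_of_ae_restrict_of_subset hE ?_)
    filter_upwards [ae_restrict_mem measurableSet_modelCube] with y hy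
    calc rieszPotential d (volume.restrict (middleCube k a)) y
        ≤ rieszPotential d (volume.restrict (closedBall y (√k * a))) y :=
          lintegral_mono' (Measure.restrict_mono (fun x hx => mem_closedBall.2
            (dist_le_of_mem_modelCube ha.le (middleCube_subset_modelCube hx) hy)) le_rfl) le_rfl
      _ ≤ _ := by
          have := rieszPotential_restrict_closedBall_le volume (hk ▸ hdk) y hR
          rwa [hk] at this
  rw [Measure.restrict_apply_univ] at hint
  rw [setLAverage_eq]
  refine ENNReal.div_le_of_le_mul (hint.trans_eq ?_)
  rw [volume_middleCube, ← ENNReal.ofReal_pow (by positivity), mul_right_comm _ (μH[d] E),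
    ← ENNReal.ofReal_mul (by positivity)]
  nth_rw 1 [← ENNReal.ofReal_toReal (a := volume (ball (0 : EuclideanSpace ℝ (Fin k)) 1))
    measure_ball_lt_top.ne]
  rw [← ENNReal.ofReal_mul (by positivity), div_mul_cancel₀ _ (by positivity)]

theorem radialProjConst_eq (hdk : d ≤ k) (ha : 0 < a) :
    (2 * (√k * a * (1 + √k * a / (a / 4)))) ^ d * (2 ^ (d + 1) * (√k * a) ^ (k - d) *
      (volume (ball (0 : EuclideanSpace ℝ (Fin k)) 1)).toReal / (a / 2) ^ k) =
      radialProjConst d k := by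
  obtain ⟨m, rfl⟩ := Nat.exists_eq_add_of_le hdk
  simp only [radialProjConst, Nat.add_sub_cancel_left, div_pow, mul_pow, pow_add]
  field_simp

theorem exists_hausdorffMeasure_radialProjImage_modelCube_le (hdk : d < k) (ha : 0 < a)
    (hE : E ⊆ modelCube k a) (hfin : μH[d] E ≠ ⊤) :
    ∃ X ⊆ modelCubeInt k a \ E, 0 < μH[k] X ∧ ∀ x ∈ X,
      μH[d] (radialProjImage (modelCube k a \ modelCubeInt k a) x E) ≤
        ENNReal.ofReal (radialProjConst d k) * μH[d] E := by
  have : IsFiniteMeasure (μH[d].restrict E) := isFiniteMeasure_restrict.2 hfin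
  set I := rieszPotential d (μH[d].restrict E)
  set G := {x ∈ middleCube k a | I x ≤ ⨍⁻ y in middleCube k a, I y ∂volume}
  have hG : 0 < volume G :=
    measure_le_setLAverage_pos (by simp [volume_middleCube, ha]) (by simp [volume_middleCube])
      (Measurable.lintegral_prod_right' (measurable_edist.inv.pow_const d)).aemeasurable
  have hvolE : volume E = 0 := by
    have hμk : μH[k] E = 0 :=
      (Measure.hausdorffMeasure_zero_or_top (Nat.cast_lt.2 hdk) E).resolve_right hfin
    exact le_antisymm ((volume_le_hausdorffMeasure E).trans_eq (by rw [Fintype.card_fin, hμk]))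
      bot_le
  refine ⟨G \ E, sdiff_subset_sdiff_left fun _ hx => middleCube_subset_modelCubeInt hx.1,
    ?_, ?_⟩
  · calc 0 < volume G := hG
      _ = volume (G \ E) := (measure_sdiff_null hvolE).symm
      _ ≤ μH[k] (G \ E) := (volume_le_hausdorffMeasure _).trans_eq (by rw [Fintype.card_fin])
  · rintro x ⟨⟨hxm, hxI⟩, hxE⟩
    calc μH[d] (radialProjImage (modelCube k a \ modelCubeInt k a) x E)
        ≤ ENNReal.ofReal (2 * (√k * a * (1 + √k * a / (a / 4)))) ^ d * I x :=
          hausdorffMeasure_radialProjImage_le_rieszPotential (by omega) ha hxm hE hxE d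
      _ ≤ ENNReal.ofReal (radialProjConst d k) * μH[d] E := by
          rw [← ENNReal.ofReal_pow (by positivity), ← radialProjConst_eq hdk.le ha,
            ENNReal.ofReal_mul (by positivity)]
          exact (mul_le_mul_right (hxI.trans (setLAverage_middleCube_rieszPotential_le hdk ha hE
            hfin)) _).trans_eq (mul_assoc _ _ _).symm

end ModelCube

theorem stmt11_general (d k n : ℕ) (hdk : d < k) :
    ∃ K : ℝ, 0 < K ∧
      ∀ a : ℝ, 0 < a →
      ∀ ι : EuclideanSpace ℝ (Fin k) →ᵃⁱ[ℝ] EuclideanSpace ℝ (Fin n),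
      ∀ E : Set (EuclideanSpace ℝ (Fin n)), E ⊆ ι '' modelCube k a → μH[d] E < ⊤ →
        ∃ X : Set (EuclideanSpace ℝ (Fin n)),
          X ⊆ (ι '' modelCubeInt k a) \ E ∧ 0 < μH[k] X ∧
          ∀ x ∈ X,
            μH[d] (radialProjImage (ι '' (modelCube k a \ modelCubeInt k a)) x E) ≤
              ENNReal.ofReal K * μH[d] E := by
  refine ⟨radialProjConst d k, radialProjConst_pos (by omega), fun a ha ι E hE hfin => ?_⟩
  obtain ⟨E, hEcube, rfl⟩ := subset_image_iff.1 hE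
  have hμ : ∀ (m : ℕ) (s : Set (EuclideanSpace ℝ (Fin k))), μH[m] (ι '' s) = μH[m] s :=
    fun m => ι.isometry.hausdorffMeasure_image (Or.inl m.cast_nonneg)
  rw [hμ] at hfin
  obtain ⟨X, hX, hXpos, hXle⟩ :=
    exists_hausdorffMeasure_radialProjImage_modelCube_le hdk ha hEcube hfin.ne
  refine ⟨ι '' X, ?_, by rwa [hμ], ?_⟩
  · rw [← image_sdiff ι.injective]
    exact image_mono hX
  · rintro _ ⟨x, hx, rfl⟩
    have h := radialProjImage_image ι.toAffineMap ι.injective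
      (modelCube k a \ modelCubeInt k a) x E
    rw [AffineIsometry.coe_toAffineMap] at h
    rw [h, hμ, hμ]
    exact hXle x hx

theorem stmt11 (d k n : ℕ) (hd : 1 ≤ d) (hdk : d < k) (hkn : k ≤ n) :
    ∃ K : ℝ, 0 < K ∧
      ∀ a : ℝ, 0 < a →
      ∀ ι : EuclideanSpace ℝ (Fin k) →ᵃⁱ[ℝ] EuclideanSpace ℝ (Fin n),
      ∀ E : Set (EuclideanSpace ℝ (Fin n)), E ⊆ ι '' modelCube k a → μH[d] E < ⊤ →
        ∃ X : Set (EuclideanSpace ℝ (Fin n)),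
          X ⊆ (ι '' modelCubeInt k a) \ E ∧ 0 < μH[k] X ∧
          ∀ x ∈ X,
            μH[d] (radialProjImage (ι '' (modelCube k a \ modelCubeInt k a)) x E) ≤
              ENNReal.ofReal K * μH[d] E :=
  stmt11_general d k n hdk
end
end
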